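/- In the large homogeneous portfolio (LHP) model, the percentage portfolio loss converges almost surely: (1−R)·(1/n)·∑_{i=1}^n 1{Y_i ≤ c} → (1−R)·Φ((c − √ρ·V)/√(1−ρ)) as n → ∞, almost surely. -/

import Mathlib

/-!
Given `V`, the events `{Y i ≤ c}` are the events `{ε i ≤ t}` with the threshold
`t = (c - √ρ V) / √(1 - ρ)`, so the loss fraction is the empirical distribution function
of the i.i.d. sample `(ε i)` at `t`. For a fixed `t` the strong law of large numbers makes it
converge almost surely to `Φ t`. Since `V` is independent of the whole sequence `(ε i)`, the
joint law of `(V, (ε i))` is a product measure, and Fubini lets us substitute the random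
threshold for `t`.
-/

open MeasureTheory ProbabilityTheory Filter

noncomputable def Phi (x : ℝ) : ℝ := (gaussianReal 0 1 (Set.Iic x)).toReal

open Topology Finset

lemma Phi_eq_cdf : Phi = cdf (gaussianReal 0 1) := by
  ext x
  rw [cdf_eq_real, Phi, measureReal_def]

lemma measurable_Phi : Measurable Phi := by
  rw [Phi_eq_cdf]
  exact (cdf _).mono.measurable

noncomputable def empiricalCDF (x : ℕ → ℝ) (n : ℕ) (t : ℝ) : ℝ :=
  (∑ i ∈ range n, (Set.Iic t).indicator 1 (x i)) / n

lemma measurable_empiricalCDF (n : ℕ) :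
    Measurable fun p : ℝ × (ℕ → ℝ) => empiricalCDF p.2 n p.1 := by
  refine (Finset.measurable_sum _ fun i _ => ?_).div_const _
  have : (fun p : ℝ × (ℕ → ℝ) => (Set.Iic p.1).indicator (1 : ℝ → ℝ) (p.2 i)) =
      {p : ℝ × (ℕ → ℝ) | p.2 i ≤ p.1}.indicator 1 := by
    ext p
    by_cases h : p.2 i ≤ p.1 <;> simp [h]
  rw [this]
  exact measurable_const.indicator (measurableSet_le measurable_snd.eval measurable_fst)

lemma measurableSet_tendsto_empiricalCDF {F : ℝ → ℝ} (hF : Measurable F) :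
    MeasurableSet
      {p : ℝ × (ℕ → ℝ) | Tendsto (fun n => empiricalCDF p.2 n p.1) atTop (𝓝 (F p.1))} :=
  measurableSet_tendsto_fun measurable_empiricalCDF (hF.comp measurable_fst)

theorem ae_tendsto_empiricalCDF {Ω : Type*} {_ : MeasurableSpace Ω} {μ : Measure Ω}
    [IsProbabilityMeasure μ] {X : ℕ → Ω → ℝ}
    (hindep : Pairwise fun i j => IndepFun (X i) (X j) μ)
    (hident : ∀ i, IdentDistrib (X i) (X 0) μ μ) (t : ℝ) :
    ∀ᵐ ω ∂μ, Tendsto (fun n => empiricalCDF (fun i => X i ω) n t) atTop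
      (𝓝 (cdf (μ.map (X 0)) t)) := by
  have hind : Measurable ((Set.Iic t).indicator (1 : ℝ → ℝ)) :=
    measurable_const.indicator measurableSet_Iic
  have hX0 : AEMeasurable (X 0) μ := (hident 0).aemeasurable_fst
  have := Measure.isProbabilityMeasure_map (μ := μ) hX0
  have hmean : μ[(Set.Iic t).indicator 1 ∘ X 0] = cdf (μ.map (X 0)) t := by
    rw [cdf_eq_real, ← integral_indicator_one measurableSet_Iic]
    exact (integral_map hX0 hind.aestronglyMeasurable).symm
  have := strong_law_ae_real (fun i => (Set.Iic t).indicator 1 ∘ X i)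
    ((integrable_const 1).indicator measurableSet_Iic |>.comp_aemeasurable hX0)
    (fun i j hij => (hindep hij).comp hind hind) (fun i => (hident i).comp hind)
  rwa [hmean] at this

lemma ProbabilityTheory.iIndepFun.indepFun_none_some {Ω ι : Type*} {_ : MeasurableSpace Ω}
    {μ : Measure Ω} [IsZeroOrProbabilityMeasure μ] {β : Option ι → Type*}
    [∀ o, MeasurableSpace (β o)] {f : (o : Option ι) → Ω → β o} (hf : iIndepFun f μ)
    (hf_meas : ∀ o, Measurable (f o)) :
    IndepFun (f none) (fun ω i => f (some i) ω) μ := by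
  refine IndepFun.indepFun_process (hf_meas none) (fun i => hf_meas (some i)) fun I => ?_
  have := hf.indepFun_finset {none} (I.map .some) (by simp) hf_meas
  exact this.comp (measurable_pi_apply (⟨none, by simp⟩ : ({none} : Finset (Option ι))))
    (measurable_pi_lambda
      (fun (y : ∀ j : I.map .some, β j) (i : I) => y ⟨some i, mem_map_of_mem _ i.2⟩)
      fun i => measurable_pi_apply _)

lemma ProbabilityTheory.IndepFun.ae_mem_of_forall_ae_mem {Ω α β : Type*} {_ : MeasurableSpace Ω}
    {μ : Measure Ω} [IsFiniteMeasure μ] [MeasurableSpace α] [MeasurableSpace β]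
    {X : Ω → α} {Y : Ω → β} (hXY : IndepFun X Y μ) (hX : Measurable X) (hY : Measurable Y)
    {B : Set (α × β)} (hB : MeasurableSet B) (h : ∀ x, ∀ᵐ ω ∂μ, (x, Y ω) ∈ B) :
    ∀ᵐ ω ∂μ, (X ω, Y ω) ∈ B := by
  -- the joint law is the product of the marginals, so Fubini applies
  have hjoint := (indepFun_iff_map_prod_eq_prod_map_map hX.aemeasurable hY.aemeasurable).1 hXY
  refine (ae_map_iff (hX.prodMk hY).aemeasurable hB).1 ?_
  rw [hjoint, Measure.ae_prod_iff_ae_ae hB]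
  exact Eventually.of_forall fun x =>
    (ae_map_iff hY.aemeasurable (measurable_prodMk_left hB)).2 (h x)

theorem lhp_loss_convergence_general
    {Ω : Type*} [MeasureSpace Ω] [IsProbabilityMeasure (ℙ : Measure Ω)]
    (V : Ω → ℝ) (ε : ℕ → Ω → ℝ)
    (hV : Measurable V) (hε : ∀ i, Measurable (ε i))
    (hεlaw : ∀ i, Measure.map (ε i) ℙ = gaussianReal 0 1)
    (hindep : iIndepFun
      (fun o : Option ℕ => o.elim V fun i => ε i) ℙ)
    (ρ : ℝ) (hρ : ρ ∈ Set.Ioo (0 : ℝ) 1) (c : ℝ) (R : ℝ)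
    (Y : ℕ → Ω → ℝ)
    (hY : ∀ i, Y i = fun ω => Real.sqrt ρ * V ω + Real.sqrt (1 - ρ) * ε i ω) :
    ∀ᵐ ω ∂ℙ, Tendsto
      (fun n : ℕ => (1 - R) * ((1 : ℝ) / n) *
        ∑ i ∈ Finset.range n, Set.indicator {ω' | Y i ω' ≤ c} (fun _ => (1 : ℝ)) ω)
      atTop
      (nhds ((1 - R) * Phi ((c - Real.sqrt ρ * V ω) / Real.sqrt (1 - ρ)))) := by
  set T : ℝ → ℝ := fun v => (c - Real.sqrt ρ * v) / Real.sqrt (1 - ρ)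
  have hT : Measurable T := by fun_prop
  have hTε : IndepFun (T ∘ V) (fun ω i => ε i ω) ℙ :=
    (hindep.indepFun_none_some (by rintro (_ | i); exacts [hV, hε i])).comp hT measurable_id
  have hslln (t : ℝ) :
      ∀ᵐ ω ∂ℙ, Tendsto (fun n => empiricalCDF (fun i => ε i ω) n t) atTop
        (𝓝 (Phi t)) := by
    have := ae_tendsto_empiricalCDF (X := ε)
      (fun i j hij => hindep.indepFun (i := some i) (j := some j) (by simpa using hij))
      (fun i => ⟨(hε i).aemeasurable, (hε 0).aemeasurable, by rw [hεlaw, hεlaw]⟩) t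
    rwa [hεlaw, ← Phi_eq_cdf] at this
  filter_upwards [hTε.ae_mem_of_forall_ae_mem (hT.comp hV) (measurable_pi_lambda _ hε)
    (measurableSet_tendsto_empiricalCDF measurable_Phi) hslln] with ω hω
  have hdefault (i : ℕ) : Y i ω ≤ c ↔ ε i ω ≤ T (V ω) := by
    rw [hY i, le_div_iff₀ (Real.sqrt_pos.2 (by linarith [hρ.2]))]
    constructor <;> intro h <;> linarith
  refine (hω.const_mul (1 - R)).congr fun n => ?_
  simp only [empiricalCDF, Set.indicator_apply, Set.mem_ofPred_eq, Set.mem_Iic, hdefault,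
    Pi.one_apply, Function.comp_apply]
  ring

/-- Large homogeneous portfolio model: `V` and `(ε_i)` independent standard
normals, `ρ ∈ (0,1)`, `Y_i = √ρ·V + √(1−ρ)·ε_i`, threshold `c`, recovery `R ∈ [0,1)`.
Then, almost surely,
`(1−R)·(1/n)·∑_{i<n} 1{Y_i ≤ c} → (1−R)·Φ((c − √ρ·V)/√(1−ρ))` as `n → ∞`. -/
theorem lhp_loss_convergence
    {Ω : Type*} [MeasureSpace Ω] [IsProbabilityMeasure (ℙ : Measure Ω)]
    (V : Ω → ℝ) (ε : ℕ → Ω → ℝ)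
    (hV : Measurable V) (hε : ∀ i, Measurable (ε i))
    (hVlaw : Measure.map V ℙ = gaussianReal 0 1)
    (hεlaw : ∀ i, Measure.map (ε i) ℙ = gaussianReal 0 1)
    (hindep : iIndepFun
      (fun o : Option ℕ => o.elim V fun i => ε i) ℙ)
    (ρ : ℝ) (hρ : ρ ∈ Set.Ioo (0 : ℝ) 1) (c : ℝ) (R : ℝ) (hR : R ∈ Set.Ico (0 : ℝ) 1)
    (Y : ℕ → Ω → ℝ)
    (hY : ∀ i, Y i = fun ω => Real.sqrt ρ * V ω + Real.sqrt (1 - ρ) * ε i ω) :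
    ∀ᵐ ω ∂ℙ, Tendsto
      (fun n : ℕ => (1 - R) * ((1 : ℝ) / n) *
        ∑ i ∈ Finset.range n, Set.indicator {ω' | Y i ω' ≤ c} (fun _ => (1 : ℝ)) ω)
      atTop
      (nhds ((1 - R) * Phi ((c - Real.sqrt ρ * V ω) / Real.sqrt (1 - ρ)))) :=
  lhp_loss_convergence_general V ε hV hε hεlaw hindep ρ hρ c R Y hY
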